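/- Let A ∈ ℝ^{m×n} and let S₁, S₂ ⊆ {1,…,n} with |S₂∖S₁| ≥ 1. Suppose δ ∈ [0,1) satisfies the RIP of order |S₁∪S₂| for A. Then for every vector u ∈ ℝ^{|S₂∖S₁|}, (1−δ)‖u‖₂² ≤ ‖P_{S₁}^⊥ A_{S₂∖S₁} u‖₂² ≤ (1+δ)‖u‖₂². -/

import Mathlib

/-!
Write `B = A_{S₁}`, `T = S₂ ∖ S₁` and `v = A_T u`. The RIP on `S₁` makes `BᵀB` invertible, so
`v = P_{S₁}^⊥ v + B c` with `c = (BᵀB)⁻¹Bᵀv`, an orthogonal decomposition. Hence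
`‖P_{S₁}^⊥ v‖² ≤ ‖v‖² ≤ (1+δ)‖u‖²`. Conversely `P_{S₁}^⊥ v = A z` where `z` is `u` on `T` and
`-c` on `S₁`; `z` is `|S₁ ∪ S₂|`-sparse with `‖z‖² = ‖u‖² + ‖c‖²`, so
`‖P_{S₁}^⊥ v‖² ≥ (1-δ)‖z‖² ≥ (1-δ)‖u‖²`.
-/

open Matrix Finset

/-- The Euclidean (`ℓ₂`) norm of a real vector. -/
noncomputable def l2norm {ι : Type*} [Fintype ι] (v : ι → ℝ) : ℝ :=
  Real.sqrt (∑ i, v i ^ 2)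

/-- The support `{i : x i ≠ 0}` of a vector, as a `Finset`. -/
noncomputable def sparseSupport {n : ℕ} (x : Fin n → ℝ) : Finset (Fin n) :=
  Finset.univ.filter (fun i => x i ≠ 0)

/-- `δ` satisfies the restricted isometry property of order `k` for `A`:
`(1-δ)‖x‖₂² ≤ ‖Ax‖₂² ≤ (1+δ)‖x‖₂²` for all `x` with at most `k` nonzero entries. -/
def RIP {m n : ℕ} (A : Matrix (Fin m) (Fin n) ℝ) (k : ℕ) (δ : ℝ) : Prop :=
  ∀ x : Fin n → ℝ, (sparseSupport x).card ≤ k →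
    (1 - δ) * (∑ i, x i ^ 2) ≤ (∑ i, (A.mulVec x) i ^ 2) ∧
    (∑ i, (A.mulVec x) i ^ 2) ≤ (1 + δ) * (∑ i, x i ^ 2)

/-- The submatrix `A_S` of `A` containing only the columns indexed by `S`. -/
def colSub {m n : ℕ} (A : Matrix (Fin m) (Fin n) ℝ) (S : Finset (Fin n)) :
    Matrix (Fin m) {j // j ∈ S} ℝ :=
  fun i j => A i j.1

/-- The orthogonal complement projector `P_S^⊥ = I - A_S (A_Sᵀ A_S)⁻¹ A_Sᵀ`
(equal to `I` when `S = ∅`). -/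
noncomputable def projPerp {m n : ℕ} (A : Matrix (Fin m) (Fin n) ℝ) (S : Finset (Fin n)) :
    Matrix (Fin m) (Fin m) ℝ :=
  1 - colSub A S * ((colSub A S)ᵀ * colSub A S)⁻¹ * (colSub A S)ᵀ

/-- The subvector `x_T`, extended by zero outside `T` (so that `A_T x_T = A (restrictVec x T)`). -/
def restrictVec {n : ℕ} (x : Fin n → ℝ) (T : Finset (Fin n)) : Fin n → ℝ :=
  fun i => if i ∈ T then x i else 0

/-- `‖(w i)_{i ∈ T}‖_∞ = max_{i ∈ T} |w i|` (equal to `0` when `T = ∅`). -/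
noncomputable def supAbs {n : ℕ} (T : Finset (Fin n)) (w : Fin n → ℝ) : ℝ :=
  sSup ((fun i => |w i|) '' ↑T)

lemma sum_sq_eq_dotProduct_self {ι : Type*} [Fintype ι] (v : ι → ℝ) :
    ∑ i, v i ^ 2 = v ⬝ᵥ v := by
  simp only [dotProduct, sq]

lemma sum_sq_add_of_dotProduct_eq_zero {ι : Type*} [Fintype ι] {v w : ι → ℝ}
    (h : v ⬝ᵥ w = 0) : ∑ i, (v + w) i ^ 2 = ∑ i, v i ^ 2 + ∑ i, w i ^ 2 := by
  simp only [sum_sq_eq_dotProduct_self, add_dotProduct, dotProduct_add, h,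
    dotProduct_comm w v]
  ring

section perpProj

variable {ι κ : Type*} [Fintype ι] [Fintype κ] [DecidableEq ι] [DecidableEq κ]

/-- `projPerp A S` is definitionally `perpProj (colSub A S)`. -/
noncomputable def perpProj (B : Matrix ι κ ℝ) : Matrix ι ι ℝ :=
  1 - B * (Bᵀ * B)⁻¹ * Bᵀ

lemma perpProj_mulVec_add (B : Matrix ι κ ℝ) (v : ι → ℝ) :
    perpProj B *ᵥ v + B *ᵥ ((Bᵀ * B)⁻¹ *ᵥ (Bᵀ *ᵥ v)) = v := by
  rw [perpProj, sub_mulVec, one_mulVec, mulVec_mulVec, mulVec_mulVec, Matrix.mul_assoc,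
    sub_add_cancel]

lemma transpose_mul_perpProj {B : Matrix ι κ ℝ} (hB : IsUnit (Bᵀ * B).det) :
    Bᵀ * perpProj B = 0 := by
  rw [perpProj, Matrix.mul_sub, Matrix.mul_one, ← Matrix.mul_assoc, ← Matrix.mul_assoc,
    mul_nonsing_inv _ hB, Matrix.one_mul, sub_self]

lemma sum_sq_perpProj_mulVec_add {B : Matrix ι κ ℝ} (hB : IsUnit (Bᵀ * B).det) (v : ι → ℝ) :
    ∑ i, (perpProj B *ᵥ v) i ^ 2 + ∑ i, (B *ᵥ ((Bᵀ * B)⁻¹ *ᵥ (Bᵀ *ᵥ v))) i ^ 2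
      = ∑ i, v i ^ 2 := by
  have horth : perpProj B *ᵥ v ⬝ᵥ B *ᵥ ((Bᵀ * B)⁻¹ *ᵥ (Bᵀ *ᵥ v)) = 0 := by
    rw [dotProduct_mulVec, ← mulVec_transpose, mulVec_mulVec, transpose_mul_perpProj hB,
      zero_mulVec, zero_dotProduct]
  rw [← sum_sq_add_of_dotProduct_eq_zero horth, perpProj_mulVec_add]

lemma sum_sq_perpProj_mulVec_le {B : Matrix ι κ ℝ} (hB : IsUnit (Bᵀ * B).det) (v : ι → ℝ) :
    ∑ i, (perpProj B *ᵥ v) i ^ 2 ≤ ∑ i, v i ^ 2 := by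
  rw [← sum_sq_perpProj_mulVec_add hB v, le_add_iff_nonneg_right]
  positivity

end perpProj

section zeroExtend

variable {ι : Type*} [DecidableEq ι]

def zeroExtend (T : Finset ι) (x : T → ℝ) : ι → ℝ :=
  fun i => if h : i ∈ T then x ⟨i, h⟩ else 0

lemma zeroExtend_of_notMem {T : Finset ι} (x : T → ℝ) {i : ι} (hi : i ∉ T) :
    zeroExtend T x i = 0 :=
  dif_neg hi

variable [Fintype ι]

lemma sum_comp_zeroExtend (T : Finset ι) (x : T → ℝ) (g : ι → ℝ → ℝ) (hg : ∀ i, g i 0 = 0) :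
    ∑ i, g i (zeroExtend T x i) = ∑ j : T, g j (x j) :=
  (Fintype.sum_of_injective Subtype.val Subtype.val_injective _ _
    (fun i hi => by rw [zeroExtend_of_notMem x (by simpa using hi), hg])
    (fun j => by simp [zeroExtend])).symm

lemma sum_sq_zeroExtend (T : Finset ι) (x : T → ℝ) :
    ∑ i, zeroExtend T x i ^ 2 = ∑ j, x j ^ 2 :=
  sum_comp_zeroExtend T x (fun _ t => t ^ 2) (fun _ => zero_pow two_ne_zero)

lemma sum_sq_zeroExtend_sub_zeroExtend {S T : Finset ι} (hST : Disjoint S T) (x : T → ℝ)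
    (y : S → ℝ) :
    ∑ i, (zeroExtend T x - zeroExtend S y) i ^ 2 = ∑ j, x j ^ 2 + ∑ j, y j ^ 2 := by
  have hprod : ∀ i, zeroExtend T x i * zeroExtend S y i = 0 := fun i => by
    by_cases hi : i ∈ T
    · rw [zeroExtend_of_notMem y (disjoint_right.mp hST hi), mul_zero]
    · rw [zeroExtend_of_notMem x hi, zero_mul]
  calc ∑ i, (zeroExtend T x - zeroExtend S y) i ^ 2
      = ∑ i, (zeroExtend T x i ^ 2 + zeroExtend S y i ^ 2) :=
        sum_congr rfl fun i _ => by rw [Pi.sub_apply]; linear_combination (-2) * hprod i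
    _ = ∑ j, x j ^ 2 + ∑ j, y j ^ 2 := by
        rw [sum_add_distrib, sum_sq_zeroExtend, sum_sq_zeroExtend]

end zeroExtend

lemma mulVec_zeroExtend {m n : ℕ} (A : Matrix (Fin m) (Fin n) ℝ) (T : Finset (Fin n)) (x : T → ℝ) :
    A *ᵥ zeroExtend T x = colSub A T *ᵥ x :=
  funext fun r => sum_comp_zeroExtend T x (fun j t => A r j * t) (fun _ => mul_zero _)

lemma sparseSupport_subset {n : ℕ} {x : Fin n → ℝ} {T : Finset (Fin n)} (hx : ∀ i ∉ T, x i = 0) :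
    sparseSupport x ⊆ T := fun i hi => by
  by_contra hiT
  exact (mem_filter.mp hi).2 (hx i hiT)

section RIP

variable {m n k : ℕ} {A : Matrix (Fin m) (Fin n) ℝ} {δ : ℝ}

theorem RIP.sum_sq_colSub_mulVec (hA : RIP A k δ) {T : Finset (Fin n)} (hT : T.card ≤ k)
    (x : T → ℝ) :
    (1 - δ) * ∑ j, x j ^ 2 ≤ ∑ i, (colSub A T *ᵥ x) i ^ 2 ∧
      ∑ i, (colSub A T *ᵥ x) i ^ 2 ≤ (1 + δ) * ∑ j, x j ^ 2 := by
  have hsupp := card_le_card (sparseSupport_subset fun i => zeroExtend_of_notMem x (i := i))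
  simpa only [mulVec_zeroExtend, sum_sq_zeroExtend] using hA _ (hsupp.trans hT)

theorem RIP.isUnit_det_gram (hA : RIP A k δ) (hδ : δ < 1) {S : Finset (Fin n)}
    (hS : S.card ≤ k) : IsUnit ((colSub A S)ᵀ * colSub A S).det := by
  have hinj : Function.Injective (colSub A S).mulVec := fun x y hxy => by
    have hlow := (hA.sum_sq_colSub_mulVec hS (x - y)).1
    rw [mulVec_sub, hxy, sub_self, sum_sq_eq_dotProduct_self, sum_sq_eq_dotProduct_self,
      dotProduct_zero] at hlow
    have hxy0 : (x - y) ⬝ᵥ (x - y) = 0 :=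
      le_antisymm (nonpos_of_mul_nonpos_right hlow (by linarith)) (dotProduct_self_star_nonneg _)
    exact sub_eq_zero.mp (dotProduct_self_eq_zero.mp hxy0)
  rw [← isUnit_iff_isUnit_det]
  simpa [conjTranspose_eq_transpose_of_trivial] using (PosDef.conjTranspose_mul_self _ hinj).isUnit

theorem RIP.sum_sq_perpProj_colSub_mulVec (hA : RIP A k δ) (hδ : δ < 1)
    {S T : Finset (Fin n)} (hST : Disjoint S T) (hk : (S ∪ T).card ≤ k) (u : T → ℝ) :
    (1 - δ) * ∑ j, u j ^ 2 ≤ ∑ i, (perpProj (colSub A S) *ᵥ (colSub A T *ᵥ u)) i ^ 2 ∧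
      ∑ i, (perpProj (colSub A S) *ᵥ (colSub A T *ᵥ u)) i ^ 2 ≤ (1 + δ) * ∑ j, u j ^ 2 := by
  set B := colSub A S
  set v := colSub A T *ᵥ u
  set c := (Bᵀ * B)⁻¹ *ᵥ (Bᵀ *ᵥ v)
  have hB : IsUnit (Bᵀ * B).det :=
    hA.isUnit_det_gram hδ ((card_le_card subset_union_left).trans hk)
  have hv := hA.sum_sq_colSub_mulVec ((card_le_card subset_union_right).trans hk) u
  refine ⟨?_, (sum_sq_perpProj_mulVec_le hB v).trans hv.2⟩
  set z := zeroExtend T u - zeroExtend S c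
  have hAz : A *ᵥ z = perpProj B *ᵥ v := by
    rw [mulVec_sub, mulVec_zeroExtend, mulVec_zeroExtend,
      eq_sub_of_add_eq (perpProj_mulVec_add B v)]
  have hz : (sparseSupport z).card ≤ k := by
    refine (card_le_card (sparseSupport_subset fun i hi => ?_)).trans hk
    rw [mem_union, not_or] at hi
    simp only [z, Pi.sub_apply, zeroExtend_of_notMem _ hi.1, zeroExtend_of_notMem _ hi.2,
      sub_zero]
  have hlow := (hA z hz).1
  rw [hAz, sum_sq_zeroExtend_sub_zeroExtend hST, mul_add] at hlow
  have hc : 0 ≤ (1 - δ) * ∑ j, c j ^ 2 := mul_nonneg (by linarith) (by positivity)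
  linarith

end RIP

theorem projPerp_RIP_general {m n : ℕ} (A : Matrix (Fin m) (Fin n) ℝ)
    (S₁ S₂ : Finset (Fin n))
    (δ : ℝ) (hδ1 : δ < 1) (hRIP : RIP A ((S₁ ∪ S₂).card) δ)
    (u : {j // j ∈ S₂ \ S₁} → ℝ) :
    (1 - δ) * (∑ j, u j ^ 2)
        ≤ (∑ i, ((projPerp A S₁).mulVec ((colSub A (S₂ \ S₁)).mulVec u)) i ^ 2) ∧
    (∑ i, ((projPerp A S₁).mulVec ((colSub A (S₂ \ S₁)).mulVec u)) i ^ 2)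
        ≤ (1 + δ) * (∑ j, u j ^ 2) :=
  hRIP.sum_sq_perpProj_colSub_mulVec hδ1 disjoint_sdiff (by rw [union_sdiff_self_eq_union]) u

/-- Lemma 4: if `|S₂ ∖ S₁| ≥ 1` and `δ` satisfies the RIP of order `|S₁ ∪ S₂|`,
then `(1−δ)‖u‖₂² ≤ ‖P_{S₁}^⊥ A_{S₂∖S₁} u‖₂² ≤ (1+δ)‖u‖₂²`. -/
theorem projPerp_RIP {m n : ℕ} (A : Matrix (Fin m) (Fin n) ℝ)
    (S₁ S₂ : Finset (Fin n)) (hcard : 1 ≤ (S₂ \ S₁).card)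
    (δ : ℝ) (hδ0 : 0 ≤ δ) (hδ1 : δ < 1) (hRIP : RIP A ((S₁ ∪ S₂).card) δ)
    (u : {j // j ∈ S₂ \ S₁} → ℝ) :
    (1 - δ) * (∑ j, u j ^ 2)
        ≤ (∑ i, ((projPerp A S₁).mulVec ((colSub A (S₂ \ S₁)).mulVec u)) i ^ 2) ∧
    (∑ i, ((projPerp A S₁).mulVec ((colSub A (S₂ \ S₁)).mulVec u)) i ^ 2)
        ≤ (1 + δ) * (∑ j, u j ^ 2) :=
  projPerp_RIP_general A S₁ S₂ δ hδ1 hRIP u
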